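/- In the odd symmetric functions OSym (q = −1), the odd Schur functions are orthonormal up to sign: (s_λ, s_μ) = (−1)^{C(λᵀ,2)} δ_{λ,μ}, given the expansions s_λ = (−1)^{C(λᵀ,2)} Σ_μ OK_{λμ} m_μ and h_μ = Σ_λ OK_{λμ} s_λ, where OK_{λμ} = Σ_{U ∈ SSYT(λ), cont(U)=μ} (−1)^{inv(U)} and m_μ is dual to h_μ. -/

import Mathlib

/-- The inversion number of a tableau:
`inv(T) = #{((i,j),(i',j')) : i < i', T(i,j) ≥ T(i',j')}`. -/
def invT (T : List (List ℕ)) : ℕ :=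
  ∑ i ∈ Finset.range T.length, ∑ i' ∈ Finset.range T.length,
    if i < i' then
      ((T.getD i []).map (fun a => ((T.getD i' []).filter (fun b => b ≤ a)).length)).sum
    else 0

/-- The inversion number of a tableau with respect to columns:
`inv^c(T) = #{((i,j),(i',j')) : j < j', T(i,j) > T(i',j')}`. -/
def invcT (T : List (List ℕ)) : ℕ :=
  ∑ i ∈ Finset.range T.length, ∑ i' ∈ Finset.range T.length,
    ∑ j ∈ Finset.range (T.getD i []).length, ∑ j' ∈ Finset.range (T.getD i' []).length,
      if j < j' ∧ (T.getD i' []).getD j' 0 < (T.getD i []).getD j 0 then 1 else 0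

/-- `NE(λ)`: the number of strictly southwest–northeast pairs of boxes of `λ`,
`#{((i,j),(i',j')) ∈ λ×λ : i > i', j < j'}`. -/
def NEshape (s : List ℕ) : ℕ :=
  ∑ i ∈ Finset.range s.length, ∑ i' ∈ Finset.range s.length,
    ∑ j ∈ Finset.range (s.getD i 0), ∑ j' ∈ Finset.range (s.getD i' 0),
      if i' < i ∧ j < j' then 1 else 0

/-- The shape of a tableau: the list of row lengths. -/
def shape (T : List (List ℕ)) : List ℕ := T.map List.length

/-- `T` is a semistandard Young tableau: nonempty rows of weakly decreasing lengths
(partition shape), positive entries weakly increasing along rows and strictly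
increasing down columns. -/
def isSSYT (T : List (List ℕ)) : Prop :=
  (∀ r ∈ T, r ≠ []) ∧
  (∀ i, i + 1 < T.length → (T.getD (i + 1) []).length ≤ (T.getD i []).length) ∧
  (∀ i j, j + 1 < (T.getD i []).length →
    (T.getD i []).getD j 0 ≤ (T.getD i []).getD (j + 1) 0) ∧
  (∀ i j, i + 1 < T.length → j < (T.getD (i + 1) []).length →
    (T.getD i []).getD j 0 < (T.getD (i + 1) []).getD j 0) ∧
  (∀ r ∈ T, ∀ a ∈ r, 0 < a)

/-- The standardization `st(T)` of a semistandard tableau: renumber the boxes in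
the order of their values, ties broken by column, left to right. -/
def stTab (T : List (List ℕ)) : List (List ℕ) :=
  T.map (fun row => row.mapIdx (fun j a =>
    1 + ∑ i' ∈ Finset.range T.length,
      (((T.getD i' []).zipIdx.map Prod.swap).filter (fun p => p.2 < a ∨ (p.2 = a ∧ p.1 < j))).length))

/-- `C(λᵀ, 2) = Σ_i C(λᵀ_i, 2)` for a shape `λ`. -/
def C2conj (s : List ℕ) : ℕ :=
  ∑ j ∈ Finset.range (s.foldr max 0), Nat.choose ((s.filter (fun r => j < r)).length) 2

/-- The content of a tableau, as the list counting occurrences of `1, 2, …`. -/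
def contComp (T : List (List ℕ)) : List ℕ :=
  (List.range (T.flatten.foldr max 0)).map (fun i => (T.flatten.filter (· = i + 1)).length)

/-- The odd Kostka number `OK_{λμ} = Σ_{U ∈ SSYT(λ), cont(U) = μ} (−1)^{inv(U)}`. -/
noncomputable def OKnum (l m : List ℕ) : ℤ :=
  ∑ᶠ U ∈ {U : List (List ℕ) | isSSYT U ∧ shape U = l ∧ contComp U = m}, (-1 : ℤ) ^ invT U

/-- A partition of `n` written as a weakly decreasing list. -/
def partList {n : ℕ} (p : n.Partition) : List ℕ := (p.parts.sort (· ≤ ·)).reverse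

/-!
Duality of `m` and `h` together with `h = s K` says that the Gram matrix `((m_a, s_b))` is a
left inverse of the odd Kostka matrix `K`, hence also a right inverse. Expanding `s_λ` in the
`m_μ` therefore gives `(s_λ, s_μ) = (-1)^{C(λᵀ,2)} (K · ((m, s)))_{λμ} = (-1)^{C(λᵀ,2)} δ_{λμ}`.
-/

section Pairing

variable {ι R V : Type*} [Fintype ι] [DecidableEq ι] [CommRing R] [AddCommGroup V] [Module R V]

def pairingMatrix (B : V →ₗ[R] V →ₗ[R] R) (m s : ι → V) : Matrix ι ι R :=
  Matrix.of fun a b => B (m a) (s b)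

variable {B : V →ₗ[R] V →ₗ[R] R} {m h s : ι → V} {K : Matrix ι ι ℤ}

theorem pairingMatrix_mul_map_intCast_eq_one
    (hdual : ∀ a b, B (m a) (h b) = if a = b then 1 else 0)
    (hh : ∀ b, h b = ∑ a, K a b • s a) :
    pairingMatrix B m s * K.map (Int.cast : ℤ → R) = 1 := by
  ext a b
  rw [Matrix.one_apply, ← hdual, hh, map_sum, Matrix.mul_apply]
  refine Finset.sum_congr rfl fun c _ => ?_
  rw [map_zsmul, zsmul_eq_mul, mul_comm]
  rfl

-- A one-sided inverse of a square matrix over a commutative ring is two-sided.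
theorem sum_intCast_mul_pairing_eq_ite
    (hdual : ∀ a b, B (m a) (h b) = if a = b then 1 else 0)
    (hh : ∀ b, h b = ∑ a, K a b • s a) (a b : ι) :
    ∑ c, (K a c : R) * B (m c) (s b) = if a = b then 1 else 0 := by
  have hinv := mul_eq_one_comm.mp (pairingMatrix_mul_map_intCast_eq_one hdual hh)
  simpa only [Matrix.mul_apply, Matrix.one_apply, Matrix.map_apply, pairingMatrix,
    Matrix.of_apply] using congrFun (congrFun hinv a) b

end Pairing

/-- In `OSym` (`q = −1`) the odd Schur functions are orthonormal up to sign: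
given that the `m_μ` are dual to the `h_μ` under the bilinear form, and the expansions
`s_λ = (−1)^{C(λᵀ,2)} Σ_μ OK_{λμ} m_μ` and `h_μ = Σ_λ OK_{λμ} s_λ`, one has
`(s_λ, s_μ) = (−1)^{C(λᵀ,2)} δ_{λμ}`. -/
theorem odd_schur_orthonormal {R V : Type*} [CommRing R] [AddCommGroup V] [Module R V]
    (n : ℕ) (B : V →ₗ[R] V →ₗ[R] R) (s m h : n.Partition → V)
    (hdual : ∀ lam mu : n.Partition, B (m lam) (h mu) = if lam = mu then 1 else 0)
    (hs : ∀ lam : n.Partition, s lam =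
      (-1 : ℤ) ^ C2conj (partList lam) •
        ∑ mu : n.Partition, (OKnum (partList lam) (partList mu) : ℤ) • m mu)
    (hh : ∀ mu : n.Partition, h mu =
      ∑ lam : n.Partition, (OKnum (partList lam) (partList mu) : ℤ) • s lam)
    (lam mu : n.Partition) :
    B (s lam) (s mu) = if lam = mu then (-1 : R) ^ C2conj (partList lam) else 0 := by
  let K : Matrix n.Partition n.Partition ℤ := fun a b => OKnum (partList a) (partList b)
  have hinv := sum_intCast_mul_pairing_eq_ite (K := K) hdual hh lam mu
  calc B (s lam) (s mu)
      = (-1 : R) ^ C2conj (partList lam) *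
          ∑ c, (K lam c : R) * B (m c) (s mu) := by
        rw [hs lam]
        simp [map_sum, zsmul_eq_mul, K]
    _ = if lam = mu then (-1 : R) ^ C2conj (partList lam) else 0 := by
        rw [hinv, mul_ite, mul_one, mul_zero]
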